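/- For any nonzero elements f, g of the free right-symmetric algebra A, the product fg is nonzero and its leading word equals the leading word of the product of the leading words of f and g: overline{fg} = overline{f̄ ḡ}. -/

import Mathlib

/-!
For good words `u, v`, the product `uv` in `A` is the good word `mulLead u v` plus a combination
of smaller good words; this is proved by well-founded induction on the word `uv`, rewriting with
the right-symmetric identity. As `mulLead` is strictly monotone in each argument on good words,
bilinearity shows that `fg` is `(c d) mulLead f̄ ḡ` plus smaller words, where `c, d` are the
leading coefficients of `f, g`.
-/

namespace RS

/-- The degree of a nonassociative word. -/
def deg {X : Type*} : FreeMagma X → ℕ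
  | .of _ => 1
  | .mul u v => deg u + deg v

/-- The order on nonassociative words: `u < v` if `d u < d v`; words of equal degree 1 are
compared in `X`; words `u = u₁u₂`, `v = v₁v₂` of equal degree `≥ 2` are compared
lexicographically. -/
def wlt {X : Type*} [LinearOrder X] : FreeMagma X → FreeMagma X → Prop
  | .of a, .of b => a < b
  | .of _, .mul _ _ => True
  | .mul _ _, .of _ => False
  | .mul u₁ u₂, .mul v₁ v₂ =>
      deg (FreeMagma.mul u₁ u₂) < deg (FreeMagma.mul v₁ v₂) ∨
        (deg (FreeMagma.mul u₁ u₂) = deg (FreeMagma.mul v₁ v₂) ∧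
          (wlt u₁ v₁ ∨ (u₁ = v₁ ∧ wlt u₂ v₂)))

/-- `u ≤ v` on nonassociative words. -/
def wle {X : Type*} [LinearOrder X] (u v : FreeMagma X) : Prop := wlt u v ∨ u = v

/-- A word is good if it contains no subword `(rs)t` with `s > t`. -/
def IsGood {X : Type*} [LinearOrder X] : FreeMagma X → Prop
  | .of _ => True
  | .mul (.of _) v => IsGood v
  | .mul (.mul u₁ u₂) v =>
      IsGood (FreeMagma.mul u₁ u₂) ∧ IsGood v ∧ ¬ wlt v u₂

/-- Evaluation of a nonassociative word at values `x` in a magma `A`. -/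
def evalWord {X A : Type*} [Mul A] (x : X → A) : FreeMagma X → A
  | .of a => x a
  | .mul u v => evalWord x u * evalWord x v

/-- Data exhibiting a nonunital nonassociative `k`-algebra `A` as the free right-symmetric
algebra `RS⟨x_1,…,x_n⟩`: `A` satisfies the right-symmetric identity and the images of the good
words form a `k`-linear basis (Segal's theorem). -/
structure FreeRSData (k : Type*) [Field k] (n : ℕ) (A : Type*)
    [NonUnitalNonAssocRing A] [Module k A] where
  rightSymm : ∀ a b c : A, (a * b) * c - a * (b * c) = (a * c) * b - a * (c * b)
  x : Fin n → A
  basis : Module.Basis {w : FreeMagma (Fin n) // IsGood w} k A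
  basis_eq : ∀ w : {w : FreeMagma (Fin n) // IsGood w}, basis w = evalWord x w.1

/-- `w` is the leading word of `f`: it is a good word occurring in the representation of `f`
in the basis of good words, and every other good word occurring there is smaller. -/
def IsLeadingWord {k : Type*} [Field k] {n : ℕ} {A : Type*} [NonUnitalNonAssocRing A]
    [Module k A] (D : FreeRSData k n A) (f : A) (w : FreeMagma (Fin n)) : Prop :=
  ∃ hw : IsGood w,
    (⟨w, hw⟩ : {u : FreeMagma (Fin n) // IsGood u}) ∈ (D.basis.repr f).support ∧
      ∀ u ∈ (D.basis.repr f).support, u.1 ≠ w → wlt u.1 w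

/-- The left-normed word `x R_{w_1} ⋯ R_{w_m} = (…((x w_1) w_2) … w_m)`. -/
def leftNormed {X : Type*} (a : FreeMagma X) (l : List (FreeMagma X)) : FreeMagma X :=
  l.foldl FreeMagma.mul a

/-- The degree of a word in the variable `a`. -/
def countVar {X : Type*} [DecidableEq X] (a : X) : FreeMagma X → ℕ
  | .of b => if b = a then 1 else 0
  | .mul u v => countVar a u + countVar a v

/-- The two-sided ideal of the nonunital nonassociative `k`-algebra `A` generated by `f`. -/
def idealGen (k : Type*) [Field k] {A : Type*} [NonUnitalNonAssocRing A] [Module k A]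
    (f : A) : Submodule k A :=
  sInf {I : Submodule k A | f ∈ I ∧ ∀ a : A, ∀ y ∈ I, a * y ∈ I ∧ y * a ∈ I}

/-- A pair of (nonzero) elements `f, g` is reducible if there is a good word `s` in a single
variable with `s(f̄) = ḡ` or `s(ḡ) = f̄`. -/
def Reducible {k : Type*} [Field k] {n : ℕ} {A : Type*} [NonUnitalNonAssocRing A]
    [Module k A] (D : FreeRSData k n A) (f g : A) : Prop :=
  ∃ wf wg : FreeMagma (Fin n), IsLeadingWord D f wf ∧ IsLeadingWord D g wg ∧
    ∃ s : FreeMagma Unit, IsGood s ∧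
      (evalWord (fun _ => wf) s = wg ∨ evalWord (fun _ => wg) s = wf)

/-- An elementary automorphism: it fixes all generators but one, which is sent to
`α x_i + f` with `α ≠ 0` and `f` in the subalgebra generated by the other generators. -/
def IsElementary {k : Type*} [Field k] {n : ℕ} {A : Type*} [NonUnitalNonAssocRing A]
    [Module k A] [SMulCommClass k A A] [IsScalarTower k A A]
    (D : FreeRSData k n A) (e : A →ₙₐ[k] A) : Prop :=
  Function.Bijective e ∧ ∃ i : Fin n,
    (∀ j : Fin n, j ≠ i → e (D.x j) = D.x j) ∧
    ∃ (α : k) (f : A), α ≠ 0 ∧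
      f ∈ NonUnitalAlgebra.adjoin k (D.x '' {j | j ≠ i}) ∧
      e (D.x i) = α • D.x i + f

theorem deg_pos {X : Type*} (u : FreeMagma X) : 0 < deg u := by
  induction u using FreeMagma.rec with
  | of a => simp [deg]
  | mul u v _ _ => simp only [deg]; omega

section WordOrder

variable {X : Type*} [LinearOrder X]

theorem wlt_irrefl (u : FreeMagma X) : ¬ wlt u u := by
  induction u using FreeMagma.rec with
  | of a => exact lt_irrefl a
  | mul u₁ u₂ ih₁ ih₂ => rintro (h | ⟨-, h | ⟨-, h⟩⟩) <;> simp_all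

theorem wlt_trans {u v w : FreeMagma X} (h₁ : wlt u v) (h₂ : wlt v w) : wlt u w := by
  induction u using FreeMagma.rec generalizing v w with
  | of a =>
    cases v using FreeMagma.rec <;> cases w using FreeMagma.rec
    all_goals first | exact lt_trans h₁ h₂ | trivial
  | mul u₁ u₂ ih₁ ih₂ =>
    cases v using FreeMagma.rec with
    | of => exact h₁.elim
    | mul v₁ v₂ =>
      cases w using FreeMagma.rec with
      | of => exact h₂.elim
      | mul w₁ w₂ =>
        rcases h₁ with h₁ | ⟨e₁, h₁ | ⟨rfl, h₁⟩⟩ <;> rcases h₂ with h₂ | ⟨e₂, h₂ | ⟨rfl, h₂⟩⟩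
        all_goals first
          | exact Or.inl (by omega)
          | refine Or.inr ⟨e₁.trans e₂, ?_⟩
        · exact Or.inl (ih₁ h₁ h₂)
        · exact Or.inl h₁
        · exact Or.inl h₂
        · exact Or.inr ⟨rfl, ih₂ h₁ h₂⟩

theorem wlt_trichotomy (u v : FreeMagma X) : wlt u v ∨ u = v ∨ wlt v u := by
  induction u using FreeMagma.rec generalizing v with
  | of a =>
    cases v using FreeMagma.rec with
    | of b => rcases lt_trichotomy a b with h | rfl | h <;> simp_all [wlt]
    | mul => exact Or.inl trivial
  | mul u₁ u₂ ih₁ ih₂ =>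
    cases v using FreeMagma.rec with
    | of => exact Or.inr (Or.inr trivial)
    | mul v₁ v₂ =>
      rcases lt_trichotomy (deg (u₁.mul u₂)) (deg (v₁.mul v₂)) with hd | hd | hd
      · exact Or.inl (Or.inl hd)
      · rcases ih₁ v₁ with h₁ | rfl | h₁
        · exact Or.inl (Or.inr ⟨hd, Or.inl h₁⟩)
        · rcases ih₂ v₂ with h₂ | rfl | h₂
          · exact Or.inl (Or.inr ⟨hd, Or.inr ⟨rfl, h₂⟩⟩)
          · exact Or.inr (Or.inl rfl)
          · exact Or.inr (Or.inr (Or.inr ⟨hd.symm, Or.inr ⟨rfl, h₂⟩⟩))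
        · exact Or.inr (Or.inr (Or.inr ⟨hd.symm, Or.inl h₁⟩))
      · exact Or.inr (Or.inr (Or.inl hd))

instance : IsStrictTotalOrder (FreeMagma X) wlt where
  irrefl := wlt_irrefl
  trans _ _ _ := wlt_trans
  trichotomous u v h₁ h₂ := ((wlt_trichotomy u v).resolve_left h₁).resolve_right h₂

noncomputable instance : LinearOrder (FreeMagma X) :=
  @linearOrderOfSTO _ wlt _ (Classical.decRel _)

theorem lt_iff_wlt {u v : FreeMagma X} : u < v ↔ wlt u v := Iff.rfl

theorem lt_of_deg_lt {u v : FreeMagma X} (h : deg u < deg v) : u < v := by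
  cases u using FreeMagma.rec with
  | of => cases v using FreeMagma.rec with
    | of => simp [deg] at h
    | mul => trivial
  | mul u₁ u₂ => cases v using FreeMagma.rec with
    | of => have := deg_pos u₁; have := deg_pos u₂; simp only [deg] at h; omega
    | mul => exact Or.inl h

theorem deg_le_of_lt {u v : FreeMagma X} (h : u < v) : deg u ≤ deg v := by
  by_contra! h'
  exact lt_asymm h (lt_of_deg_lt h')

theorem deg_le_of_le {u v : FreeMagma X} (h : u ≤ v) : deg u ≤ deg v := by
  rcases h.lt_or_eq with h | rfl
  · exact deg_le_of_lt h
  · exact le_rfl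

theorem mul_lt_mul_of_lt_left {a b a' b' : FreeMagma X} (hdeg : deg a + deg b ≤ deg a' + deg b')
    (h : a < a') : a.mul b < a'.mul b' := by
  rcases hdeg.lt_or_eq with hdeg | hdeg
  · exact lt_of_deg_lt hdeg
  · exact Or.inr ⟨hdeg, Or.inl h⟩

theorem mul_lt_mul_of_lt_right (a : FreeMagma X) {b b' : FreeMagma X} (h : b < b') :
    a.mul b < a.mul b' := by
  rcases (deg_le_of_lt h).lt_or_eq with hdeg | hdeg
  · exact lt_of_deg_lt (by simp only [deg]; omega)
  · exact Or.inr ⟨by simp only [deg]; omega, Or.inr ⟨rfl, h⟩⟩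

theorem mul_le_mul_of_le {a b a' b' : FreeMagma X} (ha : a ≤ a') (hb : b ≤ b') :
    a.mul b ≤ a'.mul b' := by
  rcases ha.lt_or_eq with ha | rfl
  · have := deg_le_of_le hb
    exact (mul_lt_mul_of_lt_left (by have := deg_le_of_lt ha; omega) ha).le
  · rcases hb.lt_or_eq with hb | rfl
    · exact (mul_lt_mul_of_lt_right a hb).le
    · exact le_rfl

theorem lt_or_eq_and_lt_of_mul_lt_mul {a b a' b' : FreeMagma X} (h : a.mul b < a'.mul b')
    (hdeg : deg a + deg b = deg a' + deg b') : a < a' ∨ (a = a' ∧ b < b') := by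
  rcases h with h | ⟨-, h⟩
  · simp only [deg] at h; omega
  · exact h

end WordOrder

section WellFounded

variable {X : Type*} [Finite X]

theorem finite_setOf_deg_le (d : ℕ) : {w : FreeMagma X | deg w ≤ d}.Finite := by
  induction d with
  | zero =>
    convert Set.finite_empty
    exact Set.eq_empty_of_forall_notMem fun w hw => (deg_pos w).ne' (Nat.le_zero.mp hw)
  | succ d ih =>
    refine ((Set.finite_range FreeMagma.of).union (ih.image2 FreeMagma.mul ih)).subset ?_
    intro w hw
    cases w using FreeMagma.rec with
    | of a => exact Or.inl ⟨a, rfl⟩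
    | mul u v =>
      have := deg_pos u; have := deg_pos v
      simp only [Set.mem_ofPred_eq, deg] at hw
      exact Or.inr ⟨u, by simp only [Set.mem_ofPred_eq]; omega, v,
        by simp only [Set.mem_ofPred_eq]; omega, rfl⟩

variable [LinearOrder X]

theorem finite_Iio (w : FreeMagma X) : (Set.Iio w).Finite :=
  (finite_setOf_deg_le (deg w)).subset fun _ => deg_le_of_lt

instance : WellFoundedLT (FreeMagma X) where
  wf := ⟨fun w => (Set.WellFoundedOn.acc_iff_wellFoundedOn.out 0 2).2 <|
    (finite_Iio w).wellFoundedOn.subset fun _ hv => by rwa [Relation.transGen_eq_self] at hv⟩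

end WellFounded

section MulLead

variable {X : Type*} [LinearOrder X]

theorem isGood_mul_left {a b : FreeMagma X} (h : IsGood (a.mul b)) : IsGood a := by
  cases a using FreeMagma.rec with
  | of => trivial
  | mul => exact h.1

theorem isGood_mul_right {a b : FreeMagma X} (h : IsGood (a.mul b)) : IsGood b := by
  cases a using FreeMagma.rec with
  | of => exact h
  | mul => exact h.2.1

/-- Inserts `v` into the right comb `(…((x u₁) u₂) … uₘ)` of `u` just before the first `uᵢ > v`;
for good `u` and `v` this is the leading word of `uv`. -/
noncomputable def mulLead : FreeMagma X → FreeMagma X → FreeMagma X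
  | .of a, v => (FreeMagma.of a).mul v
  | .mul u₁ u₂, v => if v < u₂ then (mulLead u₁ v).mul u₂ else (u₁.mul u₂).mul v

theorem mulLead_mul_of_lt {u₁ u₂ v : FreeMagma X} (h : v < u₂) :
    mulLead (u₁.mul u₂) v = (mulLead u₁ v).mul u₂ := if_pos h

theorem mulLead_mul_of_not_lt {u₁ u₂ v : FreeMagma X} (h : ¬ v < u₂) :
    mulLead (u₁.mul u₂) v = (u₁.mul u₂).mul v := if_neg h

theorem deg_mulLead (u v : FreeMagma X) : deg (mulLead u v) = deg u + deg v := by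
  induction u using FreeMagma.rec with
  | of => rfl
  | mul u₁ u₂ ih₁ _ =>
    by_cases h : v < u₂
    · rw [mulLead_mul_of_lt h]; simp only [deg] at ih₁ ⊢; omega
    · rw [mulLead_mul_of_not_lt h]; rfl

theorem isGood_mulLead_mul {u v c : FreeMagma X} (huc : IsGood (u.mul c)) (hv : IsGood v)
    (hvc : v ≤ c) : IsGood ((mulLead u v).mul c) := by
  induction u using FreeMagma.rec generalizing c with
  | of => exact ⟨hv, huc, hvc.not_gt⟩
  | mul u₁ u₂ ih₁ _ =>
    by_cases h : v < u₂
    · rw [mulLead_mul_of_lt h]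
      exact ⟨ih₁ huc.1 h.le, huc.2.1, huc.2.2⟩
    · rw [mulLead_mul_of_not_lt h]
      exact ⟨⟨huc.1, hv, h⟩, huc.2.1, hvc.not_gt⟩

theorem isGood_mulLead {u v : FreeMagma X} (hu : IsGood u) (hv : IsGood v) :
    IsGood (mulLead u v) := by
  cases u using FreeMagma.rec with
  | of => exact hv
  | mul u₁ u₂ =>
    by_cases h : v < u₂
    · rw [mulLead_mul_of_lt h]; exact isGood_mulLead_mul hu hv h.le
    · rw [mulLead_mul_of_not_lt h]; exact ⟨hu, hv, h⟩

theorem mulLead_le_mul (u v : FreeMagma X) : mulLead u v ≤ u.mul v := by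
  induction u using FreeMagma.rec with
  | of => exact le_rfl
  | mul u₁ u₂ ih₁ _ =>
    by_cases h : v < u₂
    · rw [mulLead_mul_of_lt h]
      refine (mul_lt_mul_of_lt_left (by rw [deg_mulLead]; simp only [deg]; omega) ?_).le
      exact ih₁.trans_lt (mul_lt_mul_of_lt_right u₁ h)
    · rw [mulLead_mul_of_not_lt h]

theorem strictMono_mulLead (u : FreeMagma X) : StrictMono (mulLead u) := by
  intro v v' h
  induction u using FreeMagma.rec with
  | of => exact mul_lt_mul_of_lt_right _ h
  | mul u₁ u₂ ih₁ _ =>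
    by_cases h' : v' < u₂
    · rw [mulLead_mul_of_lt (h.trans h'), mulLead_mul_of_lt h']
      exact mul_lt_mul_of_lt_left
        (by rw [deg_mulLead, deg_mulLead]; have := deg_le_of_lt h; omega) ih₁
    · rw [mulLead_mul_of_not_lt h']
      exact (mulLead_le_mul _ v).trans_lt (mul_lt_mul_of_lt_right _ h)

theorem mul_le_mul_of_mul_lt_mul {a b A B v : FreeMagma X} (hlt : a.mul b < A.mul B)
    (hdeg : deg a + deg b = deg A + deg B) (hbv : b ≤ v) (hdv : deg v = deg B) :
    a.mul b ≤ A.mul v := by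
  rcases lt_or_eq_and_lt_of_mul_lt_mul hlt hdeg with ha | ⟨rfl, -⟩
  · exact (mul_lt_mul_of_lt_left (by omega) ha).le
  · exact mul_le_mul_of_le le_rfl hbv

/-- The case of `mulLead_lt_mulLead_left` where `v` is appended to `ab` but inserted into `AB`. -/
theorem mul_le_mulLead {a b A B v : FreeMagma X} (hw : IsGood (a.mul b))
    (hW : IsGood (A.mul B)) (hlt : a.mul b < A.mul B) (hdeg : deg a + deg b = deg A + deg B)
    (hbv : b ≤ v) (hvB : v < B) (hdv : deg v = deg B) : a.mul b ≤ mulLead A v := by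
  induction A using FreeMagma.rec generalizing a b B with
  | of => exact mul_le_mul_of_mul_lt_mul hlt hdeg hbv hdv
  | mul A₁ A₂ ih₁ _ =>
    by_cases hvA : v < A₂
    swap
    · rw [mulLead_mul_of_not_lt hvA]; exact mul_le_mul_of_mul_lt_mul hlt hdeg hbv hdv
    rw [mulLead_mul_of_lt hvA]
    rcases lt_or_eq_and_lt_of_mul_lt_mul hlt hdeg with ha | ⟨rfl, -⟩
    · have hda := deg_le_of_lt ha
      have hdb := deg_le_of_le hbv
      have hdA₂ := deg_le_of_le (not_lt.1 hW.2.2)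
      have hdvA := deg_le_of_lt hvA
      cases a using FreeMagma.rec with
      | of => have := deg_pos A₁; have := deg_pos A₂; simp only [deg] at hda hdeg; omega
      | mul a₁ a₂ =>
        have ha₂b : a₂ ≤ b := not_lt.1 hw.2.2
        refine mul_le_mul_of_le ?_ (hbv.trans hvA.le)
        exact ih₁ hw.1 hW.1 ha (by simp only [deg] at hda hdeg; omega) (ha₂b.trans hbv) hvA
          (by omega)
    · exact absurd (hbv.trans_lt hvA) hw.2.2

theorem mulLead_lt_mulLead_left (v : FreeMagma X) {w W : FreeMagma X} (hw : IsGood w)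
    (hW : IsGood W) (h : w < W) : mulLead w v < mulLead W v := by
  have happend {w W : FreeMagma X} (h : w < W) (e : mulLead W v = W.mul v) :
      mulLead w v < mulLead W v :=
    e ▸ (mulLead_le_mul w v).trans_lt
      (mul_lt_mul_of_lt_left (by have := deg_le_of_lt h; omega) h)
  induction W using FreeMagma.rec generalizing w with
  | of => exact happend h rfl
  | mul A B ihA _ =>
    by_cases hvB : v < B
    swap
    · exact happend h (mulLead_mul_of_not_lt hvB)
    rcases (deg_le_of_lt h).lt_or_eq with hd | hd
    · exact lt_of_deg_lt (by rw [deg_mulLead, deg_mulLead]; omega)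
    rw [mulLead_mul_of_lt hvB]
    cases w using FreeMagma.rec with
    | of => have := deg_pos A; have := deg_pos B; simp only [deg] at hd; omega
    | mul a b =>
      have hdeg : deg a + deg b = deg A + deg B := hd
      have hda : deg a ≤ deg A := by
        rcases lt_or_eq_and_lt_of_mul_lt_mul h hdeg with ha | ⟨rfl, -⟩
        exacts [deg_le_of_lt ha, le_rfl]
      by_cases hvb : v < b
      · rw [mulLead_mul_of_lt hvb]
        rcases lt_or_eq_and_lt_of_mul_lt_mul h hdeg with ha | ⟨rfl, hb⟩
        · exact mul_lt_mul_of_lt_left (by rw [deg_mulLead, deg_mulLead]; omega)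
            (ihA (isGood_mul_left hw) (isGood_mul_left hW) ha)
        · exact mul_lt_mul_of_lt_right _ hb
      · rw [mulLead_mul_of_not_lt hvb]
        have hdv : deg v = deg B := by
          have := deg_le_of_le (not_lt.1 hvb); have := deg_le_of_lt hvB; omega
        rcases (mul_le_mulLead hw hW h hdeg (not_lt.1 hvb) hvB hdv).lt_or_eq with hlt | heq
        · exact mul_lt_mul_of_lt_left (by rw [deg_mulLead]; simp only [deg]; omega) hlt
        · rw [heq]; exact mul_lt_mul_of_lt_right _ hvB

end MulLead

section Span

variable {k : Type*} [Field k] {n : ℕ} {A : Type*} [NonUnitalNonAssocRing A] [Module k A]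

def FreeRSData.wordSpan (D : FreeRSData k n A) (s : Set (FreeMagma (Fin n))) : Submodule k A :=
  Submodule.span k (D.basis '' {u | u.1 ∈ s})

variable {D : FreeRSData k n A}

theorem mem_wordSpan {s : Set (FreeMagma (Fin n))} {a : A} :
    a ∈ D.wordSpan s ↔ ∀ u ∈ (D.basis.repr a).support, u.1 ∈ s := by
  rw [FreeRSData.wordSpan, Module.Basis.mem_span_image]
  rfl

theorem basis_mem_wordSpan {s : Set (FreeMagma (Fin n))} {u : {w // IsGood w}} (hu : u.1 ∈ s) :
    D.basis u ∈ D.wordSpan s :=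
  Submodule.subset_span ⟨u, hu, rfl⟩

theorem wordSpan_mono {s t : Set (FreeMagma (Fin n))} (h : s ⊆ t) : D.wordSpan s ≤ D.wordSpan t :=
  Submodule.span_mono (Set.image_mono fun _ hu => h hu)

theorem mul_mem_of_mem_wordSpan [SMulCommClass k A A] [IsScalarTower k A A]
    {s t : Set (FreeMagma (Fin n))} {P : Submodule k A} {a b : A}
    (h : ∀ u v : {w // IsGood w}, u.1 ∈ s → v.1 ∈ t → D.basis u * D.basis v ∈ P)
    (ha : a ∈ D.wordSpan s) (hb : b ∈ D.wordSpan t) : a * b ∈ P := by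
  have hab := Submodule.apply_mem_map₂ (LinearMap.mul k A) ha hb
  rw [FreeRSData.wordSpan, FreeRSData.wordSpan, Submodule.map₂_span_span] at hab
  refine Submodule.span_le.2 ?_ hab
  rintro _ ⟨_, ⟨u, hu, rfl⟩, _, ⟨v, hv, rfl⟩, rfl⟩
  exact h u v hu hv

theorem evalWord_eq_basis {u : FreeMagma (Fin n)} (hu : IsGood u) :
    evalWord D.x u = D.basis ⟨u, hu⟩ :=
  (D.basis_eq ⟨u, hu⟩).symm

theorem evalWord_mem_wordSpan {u : FreeMagma (Fin n)} (hu : IsGood u) :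
    evalWord D.x u ∈ D.wordSpan {u} := by
  rw [evalWord_eq_basis hu]
  exact basis_mem_wordSpan rfl

theorem mem_wordSpan_Iic_of_sub_mem {a : A} {w : FreeMagma (Fin n)} {hw : IsGood w}
    (h : a - D.basis ⟨w, hw⟩ ∈ D.wordSpan (Set.Iio w)) : a ∈ D.wordSpan (Set.Iic w) := by
  rw [← sub_add_cancel a (D.basis ⟨w, hw⟩)]
  exact add_mem (wordSpan_mono Set.Iio_subset_Iic_self h)
    (basis_mem_wordSpan (Set.mem_Iic.2 le_rfl))

end Span

section LeadingWord

variable {k : Type*} [Field k] {n : ℕ} {A : Type*} [NonUnitalNonAssocRing A] [Module k A]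
  {D : FreeRSData k n A} {f : A} {w : FreeMagma (Fin n)}

theorem isLeadingWord_of_sub_mem (hw : IsGood w) {c : k} (hc : c ≠ 0)
    (h : f - c • D.basis ⟨w, hw⟩ ∈ D.wordSpan (Set.Iio w)) : IsLeadingWord D f w := by
  rw [mem_wordSpan] at h
  have hrepr (u) : D.basis.repr f u =
      D.basis.repr (f - c • D.basis ⟨w, hw⟩) u + c * Finsupp.single ⟨w, hw⟩ 1 u := by
    rw [map_sub, map_smul, Module.Basis.repr_self, Finsupp.sub_apply, Finsupp.smul_apply,
      smul_eq_mul, sub_add_cancel]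
  have hw_notMem : ⟨w, hw⟩ ∉ (D.basis.repr (f - c • D.basis ⟨w, hw⟩)).support :=
    fun hm => lt_irrefl w (h _ hm)
  refine ⟨hw, ?_, fun u hu hne => h u ?_⟩
  · rw [Finsupp.mem_support_iff, hrepr, Finsupp.notMem_support_iff.1 hw_notMem,
      Finsupp.single_eq_same, zero_add, mul_one]
    exact hc
  · have hne' : u ≠ ⟨w, hw⟩ := fun e => hne (congrArg Subtype.val e)
    rwa [Finsupp.mem_support_iff, hrepr, Finsupp.single_eq_of_ne hne', mul_zero, add_zero,
      ← Finsupp.mem_support_iff] at hu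

theorem IsLeadingWord.isGood (h : IsLeadingWord D f w) : IsGood w := h.1

theorem IsLeadingWord.exists_sub_mem (h : IsLeadingWord D f w) :
    ∃ c : k, c ≠ 0 ∧ f - c • D.basis ⟨w, h.isGood⟩ ∈ D.wordSpan (Set.Iio w) := by
  obtain ⟨hw, hmem, hlt⟩ := h
  refine ⟨_, Finsupp.mem_support_iff.1 hmem, mem_wordSpan.2 fun u hu => ?_⟩
  by_cases hu_w : u = ⟨w, hw⟩
  · subst hu_w
    simp only [map_sub, map_smul, Module.Basis.repr_self, Finsupp.mem_support_iff,
      Finsupp.sub_apply, Finsupp.smul_apply, Finsupp.single_eq_same, smul_eq_mul, mul_one,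
      sub_self, ne_eq, not_true_eq_false] at hu
  · refine hlt u ?_ fun e => hu_w (Subtype.ext e)
    rwa [Finsupp.mem_support_iff, map_sub, map_smul, Module.Basis.repr_self, Finsupp.sub_apply,
      Finsupp.smul_apply, Finsupp.single_eq_of_ne hu_w, smul_zero, sub_zero,
      ← Finsupp.mem_support_iff] at hu

theorem IsLeadingWord.mem_wordSpan_Iic (h : IsLeadingWord D f w) : f ∈ D.wordSpan (Set.Iic w) :=
  mem_wordSpan.2 fun u hu => by
    by_cases e : u.1 = w
    exacts [e.le, (lt_iff_wlt.2 (h.2.2 u hu e)).le]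

theorem IsLeadingWord.ne_zero (h : IsLeadingWord D f w) : f ≠ 0 := by
  rintro rfl
  simpa using h.2.1

end LeadingWord

section Product

variable {k : Type*} [Field k] {n : ℕ} {A : Type*} [NonUnitalNonAssocRing A] [Module k A]
  [SMulCommClass k A A] [IsScalarTower k A A] {D : FreeRSData k n A}

def MulLeadBounded (D : FreeRSData k n A) (p : FreeMagma (Fin n)) : Prop :=
  ∀ a b, IsGood a → IsGood b → a.mul b < p →
    evalWord D.x a * evalWord D.x b ∈ D.wordSpan (Set.Iic (mulLead a b))

theorem evalWord_mul_mem_wordSpan_Iio {u₁ u₂ v : FreeMagma (Fin n)} {b : A}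
    (hbound : MulLeadBounded D ((u₁.mul u₂).mul v)) (hu₁ : IsGood u₁)
    (hb : b ∈ D.wordSpan {c | deg c ≤ deg u₂ + deg v}) :
    evalWord D.x u₁ * b ∈ D.wordSpan (Set.Iio ((mulLead u₁ v).mul u₂)) := by
  have := deg_pos u₂; have := deg_pos v; have := deg_mulLead u₁ v
  refine mul_mem_of_mem_wordSpan (fun a c ha hc => ?_) (evalWord_mem_wordSpan hu₁) hb
  obtain rfl : a = ⟨u₁, hu₁⟩ := Subtype.ext ha
  have hc : deg c.1 ≤ deg u₂ + deg v := hc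
  rw [← evalWord_eq_basis hu₁, D.basis_eq c]
  refine wordSpan_mono (Set.Iic_subset_Iio.2 ?_) (hbound _ _ hu₁ c.2 ?_)
  · exact (mulLead_le_mul u₁ c.1).trans_lt
      (mul_lt_mul_of_lt_left (by omega) (lt_of_deg_lt (by omega)))
  · exact mul_lt_mul_of_lt_left (by simp only [deg]; omega)
      (lt_of_deg_lt (by simp only [deg]; omega))

theorem evalWord_mul_evalWord_mul_sub_mem {u₁ u₂ v : FreeMagma (Fin n)}
    (hbound : MulLeadBounded D ((u₁.mul u₂).mul v)) (hu₁ : IsGood u₁) (hu₂ : IsGood u₂)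
    (hv : IsGood v) (hvu : v < u₂) (hT : IsGood ((mulLead u₁ v).mul u₂))
    (h₁ : evalWord D.x u₁ * evalWord D.x v - D.basis ⟨mulLead u₁ v, isGood_mulLead hu₁ hv⟩ ∈
      D.wordSpan (Set.Iio (mulLead u₁ v))) :
    evalWord D.x u₁ * evalWord D.x v * evalWord D.x u₂ - D.basis ⟨(mulLead u₁ v).mul u₂, hT⟩ ∈
      D.wordSpan (Set.Iio ((mulLead u₁ v).mul u₂)) := by
  have hdL := deg_mulLead u₁ v
  have hLu₂ : D.basis ⟨mulLead u₁ v, isGood_mulLead hu₁ hv⟩ * evalWord D.x u₂ =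
      D.basis ⟨(mulLead u₁ v).mul u₂, hT⟩ := by
    rw [← evalWord_eq_basis, ← evalWord_eq_basis]; rfl
  rw [← sub_add_cancel (evalWord D.x u₁ * evalWord D.x v), add_mul, hLu₂, add_sub_cancel_right]
  refine mul_mem_of_mem_wordSpan (fun a c ha hc => ?_) h₁ (evalWord_mem_wordSpan hu₂)
  obtain rfl : c = ⟨u₂, hu₂⟩ := Subtype.ext hc
  have ha : a.1 < mulLead u₁ v := ha
  have ha_lt : a.1 < u₁.mul u₂ :=
    (ha.trans_le (mulLead_le_mul u₁ v)).trans (mul_lt_mul_of_lt_right u₁ hvu)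
  have := deg_le_of_lt ha
  rw [D.basis_eq a, ← evalWord_eq_basis hu₂]
  refine wordSpan_mono (Set.Iic_subset_Iio.2 ?_) (hbound _ _ a.2 hu₂ ?_)
  · exact (mulLead_le_mul a.1 u₂).trans_lt (mul_lt_mul_of_lt_left (by omega) ha)
  · exact mul_lt_mul_of_lt_left (by simp only [deg]; omega) ha_lt

/-- Right-symmetry rewrites `(u₁u₂)v` as `u₁(u₂v) + (u₁v)u₂ - u₁(vu₂)`, and only the middle term
reaches the word `(mulLead u₁ v)u₂`. -/
theorem evalWord_mul_mul_sub_mem {u₁ u₂ v : FreeMagma (Fin n)}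
    (hbound : MulLeadBounded D ((u₁.mul u₂).mul v)) (hu : IsGood (u₁.mul u₂)) (hv : IsGood v)
    (hvu : v < u₂) (hT : IsGood ((mulLead u₁ v).mul u₂))
    (h₁ : evalWord D.x u₁ * evalWord D.x v -
      D.basis ⟨mulLead u₁ v, isGood_mulLead (isGood_mul_left hu) hv⟩ ∈
        D.wordSpan (Set.Iio (mulLead u₁ v))) :
    evalWord D.x (u₁.mul u₂) * evalWord D.x v - D.basis ⟨(mulLead u₁ v).mul u₂, hT⟩ ∈
      D.wordSpan (Set.Iio ((mulLead u₁ v).mul u₂)) := by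
  have hu₁ := isGood_mul_left hu
  have hu₂ := isGood_mul_right hu
  have := deg_pos u₁; have := deg_pos u₂; have := deg_pos v
  have hdv := deg_le_of_lt hvu
  set x := evalWord D.x
  have hexp : x (u₁.mul u₂) * x v - D.basis ⟨(mulLead u₁ v).mul u₂, hT⟩ =
      x u₁ * (x u₂ * x v) + (x u₁ * x v * x u₂ - D.basis ⟨(mulLead u₁ v).mul u₂, hT⟩) -
        x u₁ * (x v * x u₂) := by
    have h := sub_eq_iff_eq_add.1 (D.rightSymm (x u₁) (x u₂) (x v))
    change x u₁ * x u₂ * x v - _ = _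
    rw [h]; abel
  have hsmall {a b : FreeMagma (Fin n)} (hab : a.mul b < (u₁.mul u₂).mul v) (ha : IsGood a)
      (hb : IsGood b) (hdeg : deg a + deg b = deg u₂ + deg v) :
      x a * x b ∈ D.wordSpan {c | deg c ≤ deg u₂ + deg v} :=
    wordSpan_mono (fun c hc => (deg_le_of_le hc).trans (deg_mulLead a b ▸ hdeg).le)
      (hbound a b ha hb hab)
  rw [hexp]
  refine sub_mem (add_mem ?_ (evalWord_mul_evalWord_mul_sub_mem hbound hu₁ hu₂ hv hvu hT h₁)) ?_
  · exact evalWord_mul_mem_wordSpan_Iio hbound hu₁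
      (hsmall (lt_of_deg_lt (by simp only [deg]; omega)) hu₂ hv rfl)
  · exact evalWord_mul_mem_wordSpan_Iio hbound hu₁
      (hsmall (lt_of_deg_lt (by simp only [deg]; omega)) hv hu₂ (by omega))

theorem evalWord_mul_sub_mem {u v : FreeMagma (Fin n)} (hu : IsGood u) (hv : IsGood v) :
    evalWord D.x u * evalWord D.x v - D.basis ⟨mulLead u v, isGood_mulLead hu hv⟩ ∈
      D.wordSpan (Set.Iio (mulLead u v)) := by
  suffices H : ∀ p : FreeMagma (Fin n), ∀ u v (hu : IsGood u) (hv : IsGood v), u.mul v = p →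
      evalWord D.x u * evalWord D.x v - D.basis ⟨mulLead u v, isGood_mulLead hu hv⟩ ∈
        D.wordSpan (Set.Iio (mulLead u v)) from H _ u v hu hv rfl
  intro p
  induction p using WellFoundedLT.induction with
  | _ p IH =>
  rintro u v hu hv rfl
  have hgood (hT : IsGood (u.mul v)) (e : mulLead u v = u.mul v) :
      evalWord D.x u * evalWord D.x v - D.basis ⟨mulLead u v, isGood_mulLead hu hv⟩ ∈
        D.wordSpan (Set.Iio (mulLead u v)) := by
    have h0 : evalWord D.x u * evalWord D.x v - D.basis ⟨u.mul v, hT⟩ = 0 :=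
      sub_eq_zero.2 (evalWord_eq_basis hT)
    simp only [e, h0, zero_mem]
  cases u using FreeMagma.rec with
  | of => exact hgood hv rfl
  | mul u₁ u₂ =>
    by_cases hvu : v < u₂
    swap
    · exact hgood ⟨hu, hv, hvu⟩ (mulLead_mul_of_not_lt hvu)
    have := deg_pos u₂
    have hu₁v : u₁.mul v < (u₁.mul u₂).mul v :=
      mul_lt_mul_of_lt_left (by simp only [deg]; omega) (lt_of_deg_lt (by simp only [deg]; omega))
    have hstep := evalWord_mul_mul_sub_mem
      (fun _ _ ha hb hlt => mem_wordSpan_Iic_of_sub_mem (IH _ hlt _ _ ha hb rfl))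
      hu hv hvu (isGood_mulLead_mul hu hv hvu.le) (IH _ hu₁v u₁ v (isGood_mul_left hu) hv rfl)
    simpa only [mulLead_mul_of_lt hvu] using hstep

theorem basis_mul_basis_mem (u v : {w // IsGood w}) :
    D.basis u * D.basis v ∈ D.wordSpan (Set.Iic (mulLead u.1 v.1)) := by
  rw [D.basis_eq u, D.basis_eq v]
  exact mem_wordSpan_Iic_of_sub_mem (evalWord_mul_sub_mem u.2 v.2)

theorem isLeadingWord_evalWord_mul {u v : FreeMagma (Fin n)} (hu : IsGood u) (hv : IsGood v) :
    IsLeadingWord D (evalWord D.x u * evalWord D.x v) (mulLead u v) :=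
  isLeadingWord_of_sub_mem (isGood_mulLead hu hv) one_ne_zero
    (by rw [one_smul]; exact evalWord_mul_sub_mem hu hv)

theorem IsLeadingWord.mul {f g : A} {wf wg : FreeMagma (Fin n)} (hf : IsLeadingWord D f wf)
    (hg : IsLeadingWord D g wg) : IsLeadingWord D (f * g) (mulLead wf wg) := by
  obtain ⟨c, hc, hf'⟩ := hf.exists_sub_mem
  obtain ⟨d, hd, hg'⟩ := hg.exists_sub_mem
  have hT := isGood_mulLead hf.isGood hg.isGood
  refine isLeadingWord_of_sub_mem hT (mul_ne_zero hc hd) ?_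
  have hsplit : f * g - (c * d) • D.basis ⟨mulLead wf wg, hT⟩ =
      (c * d) • (D.basis ⟨wf, hf.isGood⟩ * D.basis ⟨wg, hg.isGood⟩ -
          D.basis ⟨mulLead wf wg, hT⟩) +
        c • (D.basis ⟨wf, hf.isGood⟩ * (g - d • D.basis ⟨wg, hg.isGood⟩)) +
        (f - c • D.basis ⟨wf, hf.isGood⟩) * g := by
    simp only [mul_sub, sub_mul, smul_sub, mul_smul_comm, smul_mul_assoc, mul_smul]
    abel
  rw [hsplit]
  refine add_mem (add_mem (Submodule.smul_mem _ _ ?_) (Submodule.smul_mem _ _ ?_)) ?_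
  · simpa only [evalWord_eq_basis hf.isGood, evalWord_eq_basis hg.isGood] using
      evalWord_mul_sub_mem hf.isGood hg.isGood
  · refine mul_mem_of_mem_wordSpan (fun u w hu hw => ?_)
      (basis_mem_wordSpan (Set.mem_singleton wf)) hg'
    obtain rfl : u = ⟨wf, hf.isGood⟩ := Subtype.ext hu
    exact wordSpan_mono (Set.Iic_subset_Iio.2 (strictMono_mulLead wf (Set.mem_Iio.1 hw)))
      (basis_mul_basis_mem ⟨wf, hf.isGood⟩ w)
  · refine mul_mem_of_mem_wordSpan (fun u w hu hw => ?_) hf' hg.mem_wordSpan_Iic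
    refine wordSpan_mono (Set.Iic_subset_Iio.2 ?_) (basis_mul_basis_mem u w)
    exact ((strictMono_mulLead u.1).monotone (Set.mem_Iic.1 hw)).trans_lt
      (mulLead_lt_mulLead_left wg u.2 hf.isGood (Set.mem_Iio.1 hu))

end Product

theorem statement6_general (k : Type*) [Field k] (n : ℕ) (A : Type*) [NonUnitalNonAssocRing A]
    [Module k A] [SMulCommClass k A A] [IsScalarTower k A A]
    (D : FreeRSData k n A) (f g : A)
    (wf wg : FreeMagma (Fin n))
    (hwf : IsLeadingWord D f wf) (hwg : IsLeadingWord D g wg) :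
    f * g ≠ 0 ∧ ∃ t : FreeMagma (Fin n),
      IsLeadingWord D (f * g) t ∧ IsLeadingWord D (evalWord D.x (wf.mul wg)) t :=
  ⟨(hwf.mul hwg).ne_zero, mulLead wf wg, hwf.mul hwg,
    isLeadingWord_evalWord_mul hwf.isGood hwg.isGood⟩

/-- Corollary 2.7: for nonzero `f, g` in the free right-symmetric algebra,
`fg ≠ 0` and `overline{fg} = overline{f̄ ḡ}`. -/
theorem statement6 (k : Type*) [Field k] (n : ℕ) (A : Type*) [NonUnitalNonAssocRing A]
    [Module k A] [SMulCommClass k A A] [IsScalarTower k A A]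
    (D : FreeRSData k n A) (f g : A) (hf : f ≠ 0) (hg : g ≠ 0)
    (wf wg : FreeMagma (Fin n))
    (hwf : IsLeadingWord D f wf) (hwg : IsLeadingWord D g wg) :
    f * g ≠ 0 ∧ ∃ t : FreeMagma (Fin n),
      IsLeadingWord D (f * g) t ∧ IsLeadingWord D (evalWord D.x (wf.mul wg)) t :=
  statement6_general k n A D f g wf wg hwf hwg

end RS
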